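/- arXiv:2202.09023 — 5 statements merged into one kernel-verified Lean document; each statement's English description precedes it below -/
import Mathlib

section
/- For every x ∈ ℝ^d there exists a unique curve γ_x : [0,∞) → ℝ^d with γ_x(0) = x and γ_x′(t) = ∇f(γ_x(t)) for all t ≥ 0, and γ_x(t) converges as t → ∞ to a critical point of f, i.e., there exists x∞ ∈ ℝ^d with ∇f(x∞) = 0 and lim_{t→∞} γ_x(t) = x∞. -/
/-!
Since `∇f` is bounded and Lipschitz, Picard–Lindelöf gives a unique forward flow `γ` on
`[0, ∞)`. Along it `f ∘ γ` is nondecreasing with derivative `‖∇f (γ t)‖²`; as `f` is bounded and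
`∇f ∘ γ` is Lipschitz, this forces `∇f (γ t) → 0`. If `f x > 0`, the flow stays in the compact
superlevel set `{f ≥ f x}`, which by the Morse condition contains only finitely many critical
points; `γ` therefore accumulates on that finite set only, and since `γ [T, ∞)` is connected it
converges to one of them. If `f x = 0`, then `x` is a global minimum, hence critical, and the flow
is constant.
-/

open Metric Set Filter MeasureTheory Topology
open scoped Topology RealInnerProductSpace

abbrev Euc (d : ℕ) := EuclideanSpace ℝ (Fin d)

/-- The Hessian of `f`, as the derivative of the gradient field. -/
noncomputable def hess {d : ℕ} (f : Euc d → ℝ) (x : Euc d) : Euc d →L[ℝ] Euc d :=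
  fderiv ℝ (gradient f) x

/-- The standing assumptions on the density `f`: nonnegative, integrable, vanishing at
infinity, twice differentiable with bounded and uniformly continuous zeroth, first and
second derivatives, and Morse (nonsingular Hessian at every critical point). -/
def IsNiceDensity {d : ℕ} (f : Euc d → ℝ) : Prop :=
  (∀ x, 0 ≤ f x) ∧
  Integrable f volume ∧
  Tendsto f (cocompact (Euc d)) (𝓝 0) ∧
  Differentiable ℝ f ∧
  Differentiable ℝ (gradient f) ∧
  (∃ M, ∀ x, |f x| ≤ M) ∧
  (∃ M, ∀ x, ‖gradient f x‖ ≤ M) ∧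
  (∃ M, ∀ x, ‖hess f x‖ ≤ M) ∧
  UniformContinuous f ∧
  UniformContinuous (gradient f) ∧
  UniformContinuous (hess f) ∧
  (∀ x, gradient f x = 0 → Function.Bijective (hess f x))

/-- `γ` is the gradient ascent curve of `f` starting at `x`, defined on `[0, ∞)`. -/
def IsGradFlow {d : ℕ} (f : Euc d → ℝ) (x : Euc d) (γ : ℝ → Euc d) : Prop :=
  γ 0 = x ∧ ∀ t ∈ Ici (0:ℝ), HasDerivWithinAt γ (gradient f (γ t)) (Ici 0) t

open scoped NNReal

section ForwardSolution

variable {E : Type*} [NormedAddCommGroup E] [NormedSpace ℝ E] {v : E → E} {K : ℝ≥0}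

theorem eqOn_Icc_of_hasDerivWithinAt_Icc (hv : LipschitzWith K v) {γ γ' : ℝ → E} {a b : ℝ}
    (hγ : ∀ t ∈ Icc a b, HasDerivWithinAt γ (v (γ t)) (Icc a b) t)
    (hγ' : ∀ t ∈ Icc a b, HasDerivWithinAt γ' (v (γ' t)) (Icc a b) t) (h : γ a = γ' a) :
    EqOn γ γ' (Icc a b) :=
  ODE_solution_unique (fun _ ↦ hv) (fun t ht ↦ (hγ t ht).continuousWithinAt)
    (fun t ht ↦ (hγ t (Ico_subset_Icc_self ht)).mono_of_mem_nhdsWithin (Icc_mem_nhdsGE_of_mem ht))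
    (fun t ht ↦ (hγ' t ht).continuousWithinAt)
    (fun t ht ↦ (hγ' t (Ico_subset_Icc_self ht)).mono_of_mem_nhdsWithin (Icc_mem_nhdsGE_of_mem ht))
    h

theorem eqOn_Ici_of_hasDerivWithinAt_Ici (hv : LipschitzWith K v) {γ γ' : ℝ → E} {a : ℝ}
    (hγ : ∀ t ∈ Ici a, HasDerivWithinAt γ (v (γ t)) (Ici a) t)
    (hγ' : ∀ t ∈ Ici a, HasDerivWithinAt γ' (v (γ' t)) (Ici a) t) (h : γ a = γ' a) :
    EqOn γ γ' (Ici a) := fun _ ht ↦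
  eqOn_Icc_of_hasDerivWithinAt_Icc hv (fun s hs ↦ (hγ s hs.1).mono Icc_subset_Ici_self)
    (fun s hs ↦ (hγ' s hs.1).mono Icc_subset_Ici_self) h ⟨ht, le_rfl⟩

variable [CompleteSpace E] {M : ℝ≥0}

theorem exists_hasDerivWithinAt_Icc (hv : LipschitzWith K v) (hM : ∀ y, ‖v y‖ ≤ M) (x : E)
    {T : ℝ} (hT : 0 ≤ T) :
    ∃ γ : ℝ → E, γ 0 = x ∧ ∀ t ∈ Icc 0 T, HasDerivWithinAt γ (v (γ t)) (Icc 0 T) t := by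
  have hPL : IsPicardLindelof (fun _ ↦ v) (tmin := 0) (tmax := T) ⟨0, le_rfl, hT⟩ x
      (M * T.toNNReal) 0 M K :=
    .of_time_independent (fun y _ ↦ hM y) hv.lipschitzOnWith (by simp [max_eq_left hT])
  exact hPL.exists_eq_forall_mem_Icc_hasDerivWithinAt₀

/-- Picard–Lindelöf on `[0, n]` for every `n`, glued by uniqueness. -/
theorem exists_hasDerivWithinAt_Ici (hv : LipschitzWith K v) (hM : ∀ y, ‖v y‖ ≤ M) (x : E) :
    ∃ γ : ℝ → E, γ 0 = x ∧ ∀ t ∈ Ici 0, HasDerivWithinAt γ (v (γ t)) (Ici 0) t := by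
  choose F hF0 hF using fun n : ℕ ↦ exists_hasDerivWithinAt_Icc hv hM x n.cast_nonneg
  have hagree : ∀ m n : ℕ, ∀ t ∈ Icc (0 : ℝ) m, t ≤ n → F m t = F n t := by
    intro m n t ht htn
    wlog hmn : m ≤ n generalizing m n
    · exact (this n m ⟨ht.1, htn⟩ ht.2 (le_of_not_ge hmn)).symm
    have hsub : Icc (0 : ℝ) m ⊆ Icc 0 n := Icc_subset_Icc_right (by exact_mod_cast hmn)
    exact eqOn_Icc_of_hasDerivWithinAt_Icc hv (hF m) (fun s hs ↦ (hF n s (hsub hs)).mono hsub)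
      ((hF0 m).trans (hF0 n).symm) ht
  refine ⟨fun t ↦ F (⌈t⌉₊ + 1) t, by simpa using hF0 1, fun t ht ↦ ?_⟩
  have hlt : ∀ s : ℝ, s < (⌈s⌉₊ + 1 : ℕ) := fun s ↦ by push_cast; linarith [Nat.le_ceil s]
  set n := ⌈t⌉₊ + 1
  have hγF : EqOn (fun s ↦ F (⌈s⌉₊ + 1) s) (F n) (Icc (0 : ℝ) n) := fun s hs ↦
    hagree _ n s ⟨hs.1, (hlt s).le⟩ hs.2
  have hmem : Icc (0 : ℝ) n ∈ 𝓝[Ici 0] t :=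
    mem_of_superset (inter_mem_nhdsWithin _ (Iio_mem_nhds (hlt t))) fun s hs ↦ ⟨hs.1, hs.2.le⟩
  have ht' : t ∈ Icc (0 : ℝ) n := ⟨ht, (hlt t).le⟩
  simpa only [hγF ht'] using ((hF n t ht').congr hγF (hγF ht')).mono_of_mem_nhdsWithin hmem

end ForwardSolution

theorem MonotoneOn.exists_tendsto_atTop_of_bddAbove {φ : ℝ → ℝ} {a : ℝ}
    (hφ : MonotoneOn φ (Ici a)) (hb : BddAbove (φ '' Ici a)) : ∃ l, Tendsto φ atTop (𝓝 l) := by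
  have hmono : Monotone fun t ↦ φ (max a t) := fun s t hst ↦
    hφ (le_max_left a s) (le_max_left a t) (max_le_max le_rfl hst)
  have hbdd : BddAbove (range fun t ↦ φ (max a t)) :=
    hb.mono (range_subset_iff.2 fun t ↦ mem_image_of_mem φ (le_max_left a t))
  refine ⟨_, (tendsto_atTop_ciSup hmono hbdd).congr' ?_⟩
  filter_upwards [eventually_ge_atTop a] with t ht
  rw [max_eq_right ht]

theorem mul_sub_le_sub_of_hasDerivWithinAt_Ici {φ φ' : ℝ → ℝ} {c a b C : ℝ}
    (hφ : ∀ t ∈ Ici c, HasDerivWithinAt φ (φ' t) (Ici c) t) (ha : c ≤ a) (hab : a ≤ b)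
    (hC : ∀ s ∈ Icc a b, C ≤ φ' s) : C * (b - a) ≤ φ b - φ a := by
  have hD : ∀ s ∈ interior (Icc a b), HasDerivAt φ (φ' s) s := by
    rw [interior_Icc]
    exact fun s hs ↦ (hφ s (ha.trans hs.1.le)).hasDerivAt (Ici_mem_nhds (ha.trans_lt hs.1))
  exact (convex_Icc a b).mul_sub_le_image_sub_of_le_deriv
    (fun s hs ↦ (hφ s (ha.trans hs.1)).continuousWithinAt.mono fun r hr ↦ ha.trans hr.1)
    (fun s hs ↦ (hD s hs).differentiableAt.differentiableWithinAt)
    (fun s hs ↦ (hD s hs).deriv ▸ hC s (interior_subset hs))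
    a (left_mem_Icc.2 hab) b (right_mem_Icc.2 hab) hab

/-- A Barbalat-type lemma: `φ` is nondecreasing and bounded, so `∫ ‖u‖² < ∞`, and the uniform
continuity of `u` turns this into `u → 0`. -/
theorem tendsto_zero_of_hasDerivWithinAt_norm_sq {F : Type*} [SeminormedAddCommGroup F]
    {φ : ℝ → ℝ} {u : ℝ → F} {K : ℝ≥0}
    (hφ : ∀ t ∈ Ici (0 : ℝ), HasDerivWithinAt φ (‖u t‖ ^ 2) (Ici 0) t)
    (hbdd : BddAbove (φ '' Ici 0)) (hu : LipschitzOnWith K u (Ici 0)) :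
    Tendsto u atTop (𝓝 0) := by
  have hmono : MonotoneOn φ (Ici 0) := fun s hs t _ hst ↦ by
    linarith [mul_sub_le_sub_of_hasDerivWithinAt_Ici hφ hs hst fun _ _ ↦ sq_nonneg _]
  obtain ⟨l, hl⟩ := hmono.exists_tendsto_atTop_of_bddAbove hbdd
  rw [Metric.tendsto_nhds]
  intro ε hε
  set δ := ε / 2 / (K + 1)
  have hδ : 0 < δ := by positivity
  have hKδ : K * δ ≤ ε / 2 := by
    calc K * δ = ε / 2 * (K / (K + 1)) := by simp only [δ]; ring
      _ ≤ ε / 2 * 1 := by gcongr; exact div_le_one_of_le₀ (by linarith) (by positivity)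
      _ = ε / 2 := mul_one _
  have hstep : Tendsto (fun t ↦ φ (t + δ) - φ t) atTop (𝓝 0) := by
    simpa using (hl.comp (tendsto_atTop_add_const_right atTop δ tendsto_id)).sub hl
  have hgain : 0 < (ε / 2) ^ 2 * δ := by positivity
  filter_upwards [eventually_ge_atTop 0, hstep.eventually_lt_const hgain] with t ht hsmall
  rw [dist_zero_right]
  by_contra! hlarge
  -- near `t` the norm of `u` stays above `ε / 2`, so `φ` gains at least `(ε / 2)² δ`
  suffices hC : ∀ s ∈ Icc t (t + δ), (ε / 2) ^ 2 ≤ ‖u s‖ ^ 2 by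
    have := mul_sub_le_sub_of_hasDerivWithinAt_Ici hφ ht (le_add_of_nonneg_right hδ.le) hC
    rw [add_sub_cancel_left] at this
    exact hsmall.not_ge this
  intro s hs
  have hdist : ‖u s - u t‖ ≤ K * (s - t) := by
    simpa [dist_eq_norm, abs_of_nonneg (sub_nonneg.2 hs.1)] using
      hu.dist_le_mul s (ht.trans hs.1) t ht
  have hus : ε / 2 ≤ ‖u s‖ :=
    calc ε / 2 ≤ ε - K * δ := by linarith
      _ ≤ ‖u t‖ - K * (s - t) :=
        sub_le_sub hlarge (mul_le_mul_of_nonneg_left (by linarith [hs.2]) K.coe_nonneg)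
      _ ≤ ‖u t‖ - ‖u s - u t‖ := by gcongr
      _ ≤ ‖u s‖ := by linarith [norm_sub_norm_le (u t) (u s), norm_sub_rev (u t) (u s)]
  gcongr

theorem isCompact_setOf_le_of_tendsto_cocompact {X : Type*} [TopologicalSpace X] {f : X → ℝ}
    (hf : Continuous f) {a c : ℝ} (h : Tendsto f (cocompact X) (𝓝 a)) (hc : a < c) :
    IsCompact {y | c ≤ f y} := by
  obtain ⟨K, hK, hKc⟩ := hasBasis_cocompact.mem_iff.1 (h (Iio_mem_nhds hc))
  refine hK.of_isClosed_subset (isClosed_le continuous_const hf) fun y (hy : c ≤ f y) ↦ ?_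
  by_contra hyK
  exact (hKc hyK : f y < c).not_ge hy

theorem IsCompact.finite_inter_preimage_zero_of_injective_fderiv {𝕜 E F : Type*}
    [NontriviallyNormedField 𝕜] [CompleteSpace 𝕜] [NormedAddCommGroup E] [NormedSpace 𝕜 E]
    [FiniteDimensional 𝕜 E] [NormedAddCommGroup F] [NormedSpace 𝕜 F] {g : E → F} {K : Set E}
    (hK : IsCompact K) (hg : Differentiable 𝕜 g)
    (hinj : ∀ y, g y = 0 → Function.Injective (fderiv 𝕜 g y)) :
    (K ∩ g ⁻¹' {0}).Finite := by
  refine (hK.inter_right (isClosed_singleton.preimage hg.continuous)).finite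
    (isDiscrete_iff_nhdsNE.2 fun y hy ↦ inf_principal_eq_bot.2 ?_)
  obtain ⟨C, -, hC⟩ := (fderiv 𝕜 g y : E →ₗ[𝕜] F).exists_antilipschitzWith
    (LinearMap.ker_eq_bot.2 (hinj y hy.2))
  filter_upwards [(hg y).hasFDerivAt.eventually_ne (c := 0) ⟨C, hC⟩] with z hz hzZ
  exact hz hzZ.2

theorem tendsto_nhdsSet_inter_preimage_of_isCompact {α X Y : Type*} [TopologicalSpace X]
    [TopologicalSpace Y] [T2Space Y] {l : Filter α} {γ : α → X} {g : X → Y} {K : Set X} {y : Y}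
    (hK : IsCompact K) (hg : ContinuousOn g K) (hγK : ∀ᶠ t in l, γ t ∈ K)
    (hgγ : Tendsto (g ∘ γ) l (𝓝 y)) : Tendsto γ l (𝓝ˢ (K ∩ g ⁻¹' {y})) := by
  refine (hasBasis_nhdsSet _).tendsto_right_iff.2 fun U ⟨hU, hZU⟩ ↦ ?_
  have hC : IsClosed (g '' (K \ U)) :=
    ((hK.diff hU).image_of_continuousOn (hg.mono sdiff_subset)).isClosed
  have hy : y ∉ g '' (K \ U) := fun ⟨z, ⟨hzK, hzU⟩, hz⟩ ↦ hzU (hZU ⟨hzK, hz⟩)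
  filter_upwards [hγK, hgγ (hC.isOpen_compl.mem_nhds hy)] with t htK htC
  by_contra htU
  exact htC ⟨γ t, ⟨htK, htU⟩, rfl⟩

/-- A connected tail of `γ` cannot jump between the disjoint neighbourhoods of the finitely many
points of `Z`. -/
theorem exists_tendsto_nhds_of_tendsto_nhdsSet_of_finite {X : Type*} [TopologicalSpace X]
    [T2Space X] {γ : ℝ → X} {Z : Set X} {a : ℝ} (hZ : Z.Finite) (hγ : ContinuousOn γ (Ici a))
    (h : Tendsto γ atTop (𝓝ˢ Z)) : ∃ z ∈ Z, Tendsto γ atTop (𝓝 z) := by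
  obtain ⟨U, hU, hdisj⟩ := hZ.t2_separation
  have hUZ : ⋃ z ∈ Z, U z ∈ 𝓝ˢ Z :=
    (isOpen_biUnion fun z _ ↦ (hU z).2).mem_nhdsSet.2 fun z hz ↦ mem_biUnion hz (hU z).1
  obtain ⟨T, hT⟩ := eventually_atTop.1 ((h.eventually_mem hUZ).and (eventually_ge_atTop a))
  obtain ⟨z, hz, hzT⟩ := mem_iUnion₂.1 (hT T le_rfl).1
  set V := ⋃ z' ∈ Z \ {z}, U z'
  have hzV : Disjoint (U z) V :=
    disjoint_iUnion₂_right.2 fun z' hz' ↦ hdisj hz hz'.1 (Ne.symm hz'.2)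
  have htail : γ '' Ici T ⊆ U z := by
    refine (isPreconnected_Ici.image γ (hγ.mono fun s hs ↦ (hT T le_rfl).2.trans hs))
      |>.subset_left_of_subset_union (hU z).2 (isOpen_biUnion fun z' _ ↦ (hU z').2) hzV ?_
      ⟨γ T, mem_image_of_mem γ self_mem_Ici, hzT⟩
    rintro _ ⟨s, hs, rfl⟩
    obtain ⟨z', hz', hsz'⟩ := mem_iUnion₂.1 (hT s hs).1
    by_cases hzz : z' = z
    · exact Or.inl (hzz ▸ hsz')
    · exact Or.inr (mem_biUnion ⟨hz', hzz⟩ hsz')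
  refine ⟨z, hz, fun W hW ↦ mem_map.2 ?_⟩
  have hWZ : U z ∩ W ∪ V ∈ 𝓝ˢ Z := mem_nhdsSet_iff_forall.2 fun z' hz' ↦ by
    have hUz' : U z' ∈ 𝓝 z' := (hU z').2.mem_nhds (hU z').1
    by_cases hzz : z' = z
    · subst hzz
      exact mem_of_superset (inter_mem hUz' hW) subset_union_left
    · exact mem_of_superset hUz' fun y hy ↦ Or.inr (mem_biUnion ⟨hz', hzz⟩ hy)
  filter_upwards [h.eventually_mem hWZ, eventually_ge_atTop T] with t ht htT
  exact ht.resolve_right (disjoint_left.1 hzV (htail ⟨t, htT, rfl⟩)) |>.2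

theorem IsLocalMin.gradient_eq_zero {F : Type*} [NormedAddCommGroup F] [InnerProductSpace ℝ F]
    [CompleteSpace F] {f : F → ℝ} {a : F} (h : IsLocalMin f a) : gradient f a = 0 := by
  simp [gradient, h.fderiv_eq_zero]

section GradFlow

variable {d : ℕ} {f : Euc d → ℝ} {x : Euc d} {γ : ℝ → Euc d}

theorem IsGradFlow.hasDerivWithinAt_comp (hγ : IsGradFlow f x γ) (hf : Differentiable ℝ f)
    {t : ℝ} (ht : t ∈ Ici 0) :
    HasDerivWithinAt (f ∘ γ) (‖gradient f (γ t)‖ ^ 2) (Ici 0) t := by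
  have := (hf (γ t)).hasGradientAt.hasFDerivAt.comp_hasDerivWithinAt t (hγ.2 t ht)
  rwa [InnerProductSpace.toDual_apply_apply, real_inner_self_eq_norm_sq] at this

theorem IsGradFlow.continuousOn (hγ : IsGradFlow f x γ) : ContinuousOn γ (Ici 0) :=
  fun t ht ↦ (hγ.2 t ht).continuousWithinAt

theorem IsGradFlow.lipschitzOnWith (hγ : IsGradFlow f x γ) {M : ℝ≥0}
    (hM : ∀ y, ‖gradient f y‖ ≤ M) : LipschitzOnWith M γ (Ici 0) :=
  (convex_Ici 0).lipschitzOnWith_of_nnnorm_hasDerivWithin_le hγ.2 fun _ _ ↦ hM _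

theorem IsGradFlow.monotoneOn_comp (hγ : IsGradFlow f x γ) (hf : Differentiable ℝ f) :
    MonotoneOn (f ∘ γ) (Ici 0) :=
  monotoneOn_of_hasDerivWithinAt_nonneg (convex_Ici 0)
    (fun _ ht ↦ (hγ.hasDerivWithinAt_comp hf ht).continuousWithinAt)
    (fun _ ht ↦ (hγ.hasDerivWithinAt_comp hf (interior_subset ht)).mono interior_subset)
    fun _ _ ↦ sq_nonneg _

theorem IsGradFlow.tendsto_gradient_comp (hγ : IsGradFlow f x γ) (hf : Differentiable ℝ f)
    (hfb : BddAbove (range f)) {K M : ℝ≥0} (hK : LipschitzWith K (gradient f))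
    (hM : ∀ y, ‖gradient f y‖ ≤ M) : Tendsto (gradient f ∘ γ) atTop (𝓝 0) :=
  tendsto_zero_of_hasDerivWithinAt_norm_sq (fun _ ht ↦ hγ.hasDerivWithinAt_comp hf ht)
    (hfb.mono (image_subset_range _ _ |>.trans (range_comp_subset_range γ f)))
    (hK.comp_lipschitzOnWith (hγ.lipschitzOnWith hM))

theorem IsGradFlow.exists_tendsto_critical (hγ : IsGradFlow f x γ) (hf : Differentiable ℝ f)
    (hf0 : Tendsto f (cocompact (Euc d)) (𝓝 0)) (hfb : BddAbove (range f))
    (hgrad : Differentiable ℝ (gradient f)) {K M : ℝ≥0} (hK : LipschitzWith K (gradient f))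
    (hM : ∀ y, ‖gradient f y‖ ≤ M) (hmorse : ∀ y, gradient f y = 0 → Function.Injective (hess f y))
    (hx : 0 < f x) : ∃ xlim, gradient f xlim = 0 ∧ Tendsto γ atTop (𝓝 xlim) := by
  set S := {y | f x ≤ f y}
  have hS : IsCompact S := isCompact_setOf_le_of_tendsto_cocompact hf.continuous hf0 hx
  have hγS : ∀ᶠ t in atTop, γ t ∈ S := by
    filter_upwards [eventually_ge_atTop 0] with t ht
    simpa [S, hγ.1] using hγ.monotoneOn_comp hf self_mem_Ici ht ht
  obtain ⟨z, hz, hγz⟩ := exists_tendsto_nhds_of_tendsto_nhdsSet_of_finite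
    (hS.finite_inter_preimage_zero_of_injective_fderiv hgrad hmorse) hγ.continuousOn
    (tendsto_nhdsSet_inter_preimage_of_isCompact hS hgrad.continuous.continuousOn hγS
      (hγ.tendsto_gradient_comp hf hfb hK hM))
  exact ⟨z, hz.2, hγz⟩

end GradFlow

theorem gradient_flow_exists_unique_and_converges_general
    {d : ℕ} (f : Euc d → ℝ) (hf : IsNiceDensity f) (x : Euc d) :
    ∃ γ : ℝ → Euc d, IsGradFlow f x γ ∧
      (∀ γ' : ℝ → Euc d, IsGradFlow f x γ' → EqOn γ γ' (Ici 0)) ∧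
      ∃ xlim : Euc d, gradient f xlim = 0 ∧ Tendsto γ atTop (𝓝 xlim) := by
  obtain ⟨hf_nonneg, -, hf_tendsto, hf_diff, hgrad_diff, ⟨B, hB⟩, ⟨M, hM⟩, ⟨M₂, hM₂⟩, -, -, -,
    hmorse⟩ := hf
  lift M to ℝ≥0 using (norm_nonneg _).trans (hM x)
  lift M₂ to ℝ≥0 using (norm_nonneg _).trans (hM₂ x)
  have hK : LipschitzWith M₂ (gradient f) := lipschitzWith_of_nnnorm_fderiv_le hgrad_diff hM₂
  have hfb : BddAbove (range f) := ⟨B, forall_mem_range.2 fun y ↦ (le_abs_self _).trans (hB y)⟩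
  obtain ⟨γ, hγ⟩ : ∃ γ, IsGradFlow f x γ := exists_hasDerivWithinAt_Ici hK hM x
  have huniq : ∀ γ', IsGradFlow f x γ' → EqOn γ γ' (Ici 0) := fun γ' hγ' ↦
    eqOn_Ici_of_hasDerivWithinAt_Ici hK hγ.2 hγ'.2 (hγ.1.trans hγ'.1.symm)
  refine ⟨γ, hγ, huniq, ?_⟩
  rcases (hf_nonneg x).lt_or_eq with hx | hx
  · exact hγ.exists_tendsto_critical hf_diff hf_tendsto hfb hgrad_diff hK hM
      (fun y hy ↦ (hmorse y hy).1) hx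
  · have hcrit : gradient f x = 0 :=
      IsLocalMin.gradient_eq_zero (.of_forall fun y ↦ hx ▸ hf_nonneg y)
    have hconst : IsGradFlow f x fun _ ↦ x :=
      ⟨rfl, fun t _ ↦ hcrit ▸ hasDerivWithinAt_const t _ x⟩
    exact ⟨x, hcrit, tendsto_const_nhds.congr' <| (eventually_ge_atTop 0).mono
      fun t ht ↦ (huniq _ hconst ht).symm⟩

/-- Existence, uniqueness (on `[0,∞)`) and convergence to a critical point
of the gradient ascent line starting at any point `x`. -/
theorem gradient_flow_exists_unique_and_converges
    {d : ℕ} (hd : 0 < d) (f : Euc d → ℝ) (hf : IsNiceDensity f) (x : Euc d) :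
    ∃ γ : ℝ → Euc d, IsGradFlow f x γ ∧
      (∀ γ' : ℝ → Euc d, IsGradFlow f x γ' → EqOn γ γ' (Ici 0)) ∧
      ∃ xlim : Euc d, gradient f xlim = 0 ∧ Tendsto γ atTop (𝓝 xlim) :=
  gradient_flow_exists_unique_and_converges_general f hf x
end

section
/- Let x⋆ be a mode of f and let B be its basin of attraction. Then the gradient ascent flow, viewed as the map sending x ∈ B to the set γ_x([0,∞)) ⊆ ℝ^d, is continuous on B with respect to the Hausdorff distance: for every x ∈ B and every η > 0 there exists δ > 0 such that for all y with ‖y − x‖ < δ, the Hausdorff distance between γ_x([0,∞)) and γ_y([0,∞)) is less than η. -/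
open Metric Set Filter MeasureTheory Topology
open scoped Topology RealInnerProductSpace

open scoped NNReal

/-!
At a mode `x⋆` the Morse condition makes the Hessian negative definite, so
`∇f z ≈ ∇²f(x⋆) (z - x⋆)` points strictly inwards on every small sphere around `x⋆`, and a
gradient line that enters such a ball never leaves it. Given `η`, take such a ball of radius
`ρ < η / 2` and a time `T` after which `γ_x` stays in the concentric ball of radius `ρ / 2`.
The gradient is Lipschitz, so by Grönwall's inequality `γ_y` stays `ρ / 2`-close to `γ_x` on
`[0, T]` when `y` is close to `x`; in particular `γ_y(T)` lies in the ball and `γ_y` is trapped as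
well. The two images then lie within `2ρ < η` of each other in the Hausdorff distance.
-/

namespace ContinuousLinearMap

variable {E : Type*} [NormedAddCommGroup E] [InnerProductSpace ℝ E] {T : E →L[ℝ] E}

theorem IsPositive.apply_eq_zero_of_inner_self_eq_zero (hT : T.IsPositive) {x : E}
    (hx : ⟪T x, x⟫ = 0) : T x = 0 := by
  -- expand `0 ≤ ⟪T (x - t • T x), x - t • T x⟫` and let `t → 0⁺`
  have key : ∀ t > (0 : ℝ), 2 * ‖T x‖ ^ 2 ≤ t * ⟪T (T x), T x⟫ := by
    intro t ht
    have h := hT.inner_nonneg_left (x - t • T x)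
    have hsymm : ⟪T (T x), x⟫ = ‖T x‖ ^ 2 := by
      rw [hT.inner_left_eq_inner_right, real_inner_comm, real_inner_self_eq_norm_sq]
    simp only [map_sub, map_smul, inner_sub_left, inner_sub_right, real_inner_smul_left,
      real_inner_smul_right, hx, hsymm, real_inner_self_eq_norm_sq] at h
    nlinarith
  have hlim : Tendsto (fun t : ℝ => t * ⟪T (T x), T x⟫) (𝓝[>] 0) (𝓝 0) := by
    have h : Tendsto (fun t : ℝ => t * ⟪T (T x), T x⟫) (𝓝 0) (𝓝 (0 * ⟪T (T x), T x⟫)) :=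
      tendsto_id.mul_const _
    simpa using h.mono_left nhdsWithin_le_nhds
  have h := ge_of_tendsto hlim (eventually_nhdsWithin_of_forall key)
  exact norm_eq_zero.mp (by nlinarith [norm_nonneg (T x)])

theorem IsPositive.exists_pos_mul_norm_sq_le_inner [FiniteDimensional ℝ E] (hT : T.IsPositive)
    (hinj : Function.Injective T) : ∃ c > 0, ∀ x, c * ‖x‖ ^ 2 ≤ ⟪T x, x⟫ := by
  rcases subsingleton_or_nontrivial E with hE | hE
  · exact ⟨1, one_pos, fun x => by simp [Subsingleton.elim x 0]⟩
  have hq : Continuous fun v => ⟪T v, v⟫ := by fun_prop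
  obtain ⟨u, hu, hmin⟩ := (isCompact_sphere (0 : E) 1).exists_isMinOn
    (NormedSpace.sphere_nonempty.mpr zero_le_one) hq.continuousOn
  have hu0 : u ≠ 0 := ne_zero_of_mem_sphere one_ne_zero ⟨u, hu⟩
  refine ⟨⟪T u, u⟫, (hT.inner_nonneg_left u).lt_of_ne' fun h => hu0 (hinj ?_), fun x => ?_⟩
  · rw [hT.apply_eq_zero_of_inner_self_eq_zero h, map_zero]
  rcases eq_or_ne x 0 with rfl | hx
  · simp
  have hxu : ‖x‖⁻¹ • x ∈ sphere (0 : E) 1 := by simp [norm_smul, hx]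
  have h : ⟪T u, u⟫ ≤ ⟪T (‖x‖⁻¹ • x), ‖x‖⁻¹ • x⟫ := hmin hxu
  simp only [map_smul, real_inner_smul_left, real_inner_smul_right] at h
  have hx' : 0 < ‖x‖ := norm_pos_iff.mpr hx
  calc ⟪T u, u⟫ * ‖x‖ ^ 2 ≤ ‖x‖⁻¹ * (‖x‖⁻¹ * ⟪T x, x⟫) * ‖x‖ ^ 2 := by gcongr
    _ = ⟪T x, x⟫ := by field_simp

end ContinuousLinearMap

theorem IsLocalMax.deriv_deriv_nonpos {g : ℝ → ℝ} {a : ℝ} (h : IsLocalMax g a)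
    (hc : ContinuousAt g a) : deriv (deriv g) a ≤ 0 := by
  by_contra! hpos
  -- the second-derivative test makes `a` a local minimum too, so `g` is locally constant
  have hconst : g =ᶠ[𝓝 a] fun _ => g a :=
    (h.and (isLocalMin_of_deriv_deriv_pos hpos h.deriv_eq_zero hc)).mono
      fun _ ht => le_antisymm ht.1 ht.2
  simp [hconst.deriv.deriv_eq] at hpos

section Hessian

variable {E : Type*} [NormedAddCommGroup E] [InnerProductSpace ℝ E] [CompleteSpace E]
  {f : E → ℝ} {x : E}

theorem isSymmetric_fderiv_gradient (hf : Differentiable ℝ f)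
    (hg : DifferentiableAt ℝ (gradient f) x) :
    (fderiv ℝ (gradient f) x : E →ₗ[ℝ] E).IsSymmetric := by
  set J := (InnerProductSpace.toDual ℝ E).toLinearIsometry.toContinuousLinearMap
  have hd : HasFDerivAt (fderiv ℝ f) (J.comp (fderiv ℝ (gradient f) x)) x := by
    rw [← toDual_comp_gradient]
    exact J.hasFDerivAt.comp x hg.hasFDerivAt
  intro u v
  simpa [J, real_inner_comm] using
    second_derivative_symmetric (fun y => (hf y).hasFDerivAt) hd u v

theorem IsLocalMax.inner_fderiv_gradient_self_nonpos (h : IsLocalMax f x)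
    (hf : Differentiable ℝ f) (hg : DifferentiableAt ℝ (gradient f) x) (v : E) :
    ⟪fderiv ℝ (gradient f) x v, v⟫ ≤ 0 := by
  set ℓ : ℝ → E := fun t => x + t • v
  have hℓ : ∀ t, HasDerivAt ℓ v t := fun t =>
    (((hasDerivAt_id' t).smul_const v).const_add x).congr_deriv (one_smul ℝ v)
  have hℓ0 : ℓ 0 = x := by simp [ℓ]
  have hderiv : deriv (f ∘ ℓ) = fun t => ⟪gradient f (ℓ t), v⟫ := by
    funext t
    rw [inner_gradient_left]
    exact ((hf (ℓ t)).hasFDerivAt.comp_hasDerivAt t (hℓ t)).deriv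
  have hderiv2 :
      HasDerivAt (fun t => ⟪gradient f (ℓ t), v⟫) ⟪fderiv ℝ (gradient f) x v, v⟫ 0 := by
    have hgℓ := (hℓ0 ▸ hg.hasFDerivAt).comp_hasDerivAt 0 (hℓ 0)
    simpa [hℓ0] using hgℓ.inner ℝ (hasDerivAt_const 0 v)
  rw [← hderiv2.deriv, ← hderiv]
  exact (hℓ0 ▸ h).comp_continuous (hℓ 0).continuousAt |>.deriv_deriv_nonpos
    (hf.continuous.continuousAt.comp (hℓ 0).continuousAt)

theorem IsLocalMax.exists_inner_fderiv_gradient_self_le [FiniteDimensional ℝ E]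
    (h : IsLocalMax f x) (hf : Differentiable ℝ f) (hg : DifferentiableAt ℝ (gradient f) x)
    (hinj : Function.Injective (fderiv ℝ (gradient f) x)) :
    ∃ c > 0, ∀ v, ⟪fderiv ℝ (gradient f) x v, v⟫ ≤ -(c * ‖v‖ ^ 2) := by
  have hpos : (-fderiv ℝ (gradient f) x).IsPositive := by
    refine (ContinuousLinearMap.isPositive_iff _).mpr ⟨?_, fun v => ?_⟩
    · intro u v
      simpa using isSymmetric_fderiv_gradient hf hg u v
    · simpa using h.inner_fderiv_gradient_self_nonpos hf hg v
  obtain ⟨c, hc, hle⟩ := hpos.exists_pos_mul_norm_sq_le_inner (neg_injective.comp hinj)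
  exact ⟨c, hc, fun v => by simpa [le_neg] using hle v⟩

end Hessian

section InnerProductSpace

variable {E : Type*} [NormedAddCommGroup E] [InnerProductSpace ℝ E]

theorem HasFDerivAt.eventually_forall_sphere_inner_neg {g : E → E} {A : E →L[ℝ] E} {p : E}
    (hg : HasFDerivAt g A p) (hp : g p = 0) {c : ℝ} (hc : 0 < c)
    (hA : ∀ v, ⟪A v, v⟫ ≤ -(c * ‖v‖ ^ 2)) :
    ∀ᶠ ρ in 𝓝[>] 0, ∀ z ∈ sphere p ρ, ⟪g z, z - p⟫ < 0 := by
  obtain ⟨ε, hε, hball⟩ := Metric.eventually_nhds_iff.mp (hg.isLittleO.def (half_pos hc))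
  filter_upwards [Ioo_mem_nhdsGT hε] with ρ hρ z hz
  have hzp : ‖z - p‖ = ρ := by rw [← dist_eq_norm, mem_sphere.mp hz]
  have herr : ‖g z - A (z - p)‖ ≤ c / 2 * ‖z - p‖ := by
    simpa [hp] using hball (mem_sphere.mp hz ▸ hρ.2)
  calc ⟪g z, z - p⟫ = ⟪A (z - p), z - p⟫ + ⟪g z - A (z - p), z - p⟫ := by
        rw [← inner_add_left, add_sub_cancel]
    _ ≤ -(c * ‖z - p‖ ^ 2) + c / 2 * ‖z - p‖ * ‖z - p‖ :=
        add_le_add (hA _) ((real_inner_le_norm _ _).trans (by gcongr))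
    _ < 0 := by rw [hzp]; nlinarith [mul_pos hc (pow_pos hρ.1 2)]

theorem dist_le_of_forall_sphere_inner_neg {v : E → E} {c : ℝ → E} {p : E} {ρ T : ℝ}
    (hc : ∀ t ∈ Ici T, HasDerivWithinAt c (v (c t)) (Ici T) t)
    (hv : ∀ z ∈ sphere p ρ, ⟪v z, z - p⟫ < 0) (hT : dist (c T) p ≤ ρ) {t : ℝ} (ht : T ≤ t) :
    dist (c t) p ≤ ρ := by
  have hρ : 0 ≤ ρ := dist_nonneg.trans hT
  have hV : ∀ s ∈ Ici T,
      HasDerivWithinAt (fun s => ‖c s - p‖ ^ 2) (2 * ⟪c s - p, v (c s)⟫) (Ici T) s :=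
    fun s hs => ((hc s hs).sub_const p).norm_sq
  -- `‖c s - p‖²` would have to cross `ρ²` upwards, but it strictly decreases on the sphere
  have key : ‖c t - p‖ ^ 2 ≤ ρ ^ 2 := by
    refine image_le_of_deriv_right_lt_deriv_boundary (B' := 0)
      (fun s hs => (hV s hs.1).continuousWithinAt.mono Icc_subset_Ici_self)
      (fun s hs => (hV s hs.1).mono (Ici_subset_Ici.mpr hs.1))
      (by rw [← dist_eq_norm]; gcongr) (fun _ => hasDerivAt_const _ _)
      (fun s _ hs => ?_) ⟨ht, le_rfl⟩
    have hs' : c s ∈ sphere p ρ := by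
      rw [mem_sphere, dist_eq_norm]
      exact (pow_left_inj₀ (norm_nonneg _) hρ two_ne_zero).mp hs
    have := hv _ hs'
    rw [real_inner_comm] at this
    simp only [Pi.zero_apply]
    linarith
  rw [dist_eq_norm]
  exact (pow_le_pow_iff_left₀ (norm_nonneg _) hρ two_ne_zero).mp key

end InnerProductSpace

theorem dist_le_mul_exp_of_lipschitzWith {E : Type*} [NormedAddCommGroup E] [NormedSpace ℝ E]
    {v : E → E} {K : ℝ≥0} (hv : LipschitzWith K v) {a b : ℝ → E}
    (ha : ∀ t ∈ Ici (0 : ℝ), HasDerivWithinAt a (v (a t)) (Ici 0) t)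
    (hb : ∀ t ∈ Ici (0 : ℝ), HasDerivWithinAt b (v (b t)) (Ici 0) t) {t : ℝ} (ht : 0 ≤ t) :
    dist (a t) (b t) ≤ dist (a 0) (b 0) * Real.exp (K * t) := by
  simpa using dist_le_of_trajectories_ODE (fun _ => hv)
    (fun s hs => (ha s hs.1).continuousWithinAt.mono Icc_subset_Ici_self)
    (fun s hs => (ha s hs.1).mono (Ici_subset_Ici.mpr hs.1))
    (fun s hs => (hb s hs.1).continuousWithinAt.mono Icc_subset_Ici_self)
    (fun s hs => (hb s hs.1).mono (Ici_subset_Ici.mpr hs.1)) le_rfl t ⟨ht, le_rfl⟩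

theorem hausdorffDist_image_Ici_le {α : Type*} [PseudoMetricSpace α] {a b : ℝ → α} {p : α}
    {T r : ℝ} (hT : 0 ≤ T) (hclose : ∀ t ∈ Icc 0 T, dist (a t) (b t) ≤ 2 * r)
    (ha : ∀ t ≥ T, dist (a t) p ≤ r) (hb : ∀ t ≥ T, dist (b t) p ≤ r) :
    hausdorffDist (a '' Ici 0) (b '' Ici 0) ≤ 2 * r := by
  have hr : 0 ≤ r := dist_nonneg.trans (ha T le_rfl)
  have shadow : ∀ a b : ℝ → α, (∀ t ∈ Icc 0 T, dist (a t) (b t) ≤ 2 * r) →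
      (∀ t ≥ T, dist (a t) p ≤ r) → (∀ t ≥ T, dist (b t) p ≤ r) →
      ∀ z ∈ a '' Ici 0, ∃ w ∈ b '' Ici 0, dist z w ≤ 2 * r := by
    rintro a b hclose ha hb _ ⟨t, ht, rfl⟩
    rcases le_total t T with htT | hTt
    · exact ⟨b t, mem_image_of_mem b ht, hclose t ⟨ht, htT⟩⟩
    · refine ⟨b T, mem_image_of_mem b hT, ?_⟩
      linarith [dist_triangle_right (a t) (b T) p, ha t hTt, hb T le_rfl]
  exact hausdorffDist_le_of_mem_dist (by positivity) (shadow a b hclose ha hb)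
    (shadow b a (fun t ht => dist_comm (a t) (b t) ▸ hclose t ht) hb ha)

theorem exists_hausdorffDist_image_Ici_lt_of_tendsto {E : Type*} [NormedAddCommGroup E]
    [InnerProductSpace ℝ E] {v : E → E} {K : ℝ≥0} (hv : LipschitzWith K v) {γ : E → ℝ → E}
    (hγ0 : ∀ x, γ x 0 = x)
    (hγ : ∀ x, ∀ t ∈ Ici (0 : ℝ), HasDerivWithinAt (γ x) (v (γ x t)) (Ici 0) t) {p : E}
    (hp : ∀ᶠ ρ in 𝓝[>] 0, ∀ z ∈ sphere p ρ, ⟪v z, z - p⟫ < 0) {x : E}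
    (hx : Tendsto (γ x) atTop (𝓝 p)) :
    ∀ η > (0 : ℝ), ∃ δ > (0 : ℝ), ∀ y, ‖y - x‖ < δ →
      hausdorffDist (γ x '' Ici 0) (γ y '' Ici 0) < η := by
  intro η hη
  obtain ⟨ρ, hρp, hρ, hρη⟩ := (hp.and (Ioo_mem_nhdsGT (half_pos hη))).exists
  obtain ⟨T, hxT : dist (γ x T) p ≤ ρ / 2, hT⟩ :=
    ((hx.eventually (closedBall_mem_nhds p (half_pos hρ))).and (eventually_ge_atTop 0)).exists
  refine ⟨ρ / 2 / Real.exp (K * T), by positivity, fun y hy => ?_⟩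
  have hclose : ∀ t ∈ Icc 0 T, dist (γ x t) (γ y t) ≤ ρ / 2 := fun t ht => calc
    dist (γ x t) (γ y t) ≤ dist (γ x 0) (γ y 0) * Real.exp (K * t) :=
      dist_le_mul_exp_of_lipschitzWith hv (hγ x) (hγ y) ht.1
    _ ≤ ρ / 2 / Real.exp (K * T) * Real.exp (K * T) := by
      rw [hγ0, hγ0, dist_comm, dist_eq_norm]
      gcongr
      exact ht.2
    _ = ρ / 2 := div_mul_cancel₀ _ (Real.exp_pos _).ne'
  have htrap : ∀ z, dist (γ z T) p ≤ ρ → ∀ t ≥ T, dist (γ z t) p ≤ ρ := fun z hz _ ht =>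
    dist_le_of_forall_sphere_inner_neg
      (fun s hs => (hγ z s (hT.trans hs)).mono (Ici_subset_Ici.mpr hT)) hρp hz ht
  have hyT : dist (γ y T) p ≤ ρ := by
    linarith [dist_triangle_left (γ y T) p (γ x T), hclose T ⟨hT, le_rfl⟩]
  calc hausdorffDist (γ x '' Ici 0) (γ y '' Ici 0) ≤ 2 * ρ :=
        hausdorffDist_image_Ici_le hT (fun t ht => by linarith [hclose t ht])
          (htrap x (by linarith)) (htrap y hyT)
    _ < η := by linarith

theorem gradient_flow_hausdorff_continuous_on_basin_general
    {d : ℕ} (f : Euc d → ℝ) (hf : IsNiceDensity f)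
    (γ : Euc d → ℝ → Euc d) (hγ : ∀ x, IsGradFlow f x (γ x))
    (xstar : Euc d) (hmode : IsLocalMax f xstar)
    (x : Euc d) (hx : Tendsto (γ x) atTop (𝓝 xstar)) :
    ∀ η > (0:ℝ), ∃ δ > (0:ℝ), ∀ y : Euc d, ‖y - x‖ < δ →
      hausdorffDist (γ x '' Ici (0:ℝ)) (γ y '' Ici (0:ℝ)) < η := by
  obtain ⟨-, -, -, hdiff, hgdiff, -, -, ⟨M, hM⟩, -, -, -, hmorse⟩ := hf
  have hcrit : gradient f xstar = 0 := by rw [gradient, hmode.fderiv_eq_zero, map_zero]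
  obtain ⟨c, hc, hneg⟩ :=
    hmode.exists_inner_fderiv_gradient_self_le hdiff (hgdiff xstar) (hmorse xstar hcrit).injective
  have hlip : LipschitzWith M.toNNReal (gradient f) :=
    lipschitzWith_of_nnnorm_fderiv_le hgdiff fun z => by
      rw [← NNReal.coe_le_coe, coe_nnnorm]
      exact (hM z).trans M.le_coe_toNNReal
  exact exists_hausdorffDist_image_Ici_lt_of_tendsto hlip (fun z => (hγ z).1) (fun z => (hγ z).2)
    ((hgdiff xstar).hasFDerivAt.eventually_forall_sphere_inner_neg hcrit hc hneg) hx

/-- On the basin of attraction of a mode, the map sending a point `x` to the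
image of its gradient ascent line `γ_x([0,∞))` is continuous for the Hausdorff distance. -/
theorem gradient_flow_hausdorff_continuous_on_basin
    {d : ℕ} (hd : 0 < d) (f : Euc d → ℝ) (hf : IsNiceDensity f)
    (γ : Euc d → ℝ → Euc d) (hγ : ∀ x, IsGradFlow f x (γ x))
    (xstar : Euc d) (hmode : IsLocalMax f xstar)
    (x : Euc d) (hx : Tendsto (γ x) atTop (𝓝 xstar)) :
    ∀ η > (0:ℝ), ∃ δ > (0:ℝ), ∀ y : Euc d, ‖y - x‖ < δ →
      hausdorffDist (γ x '' Ici (0:ℝ)) (γ y '' Ici (0:ℝ)) < η :=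
  gradient_flow_hausdorff_continuous_on_basin_general f hf γ hγ xstar hmode x hx
end

section
/- Let x₀ ∈ supp f and write C(x₀) for the connected component of U_{f(x₀)} = {x : f(x) ≥ f(x₀)} containing x₀. If ε > 0 is smaller than the distance between C(x₀) and U_{f(x₀)} \ C(x₀) (no condition if U_{f(x₀)} is connected), then every Max Shift sequence with parameter ε started at x₀ remains in C(x₀), is eventually constant (converges in a finite number of steps) equal to a point x∞ ∈ C(x₀), and x∞ maximizes f over ball(x∞, ε); in particular x∞ is a mode of f. -/
open Metric Set Filter MeasureTheory Topology
open scoped Topology RealInnerProductSpace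

/-- A Max Shift sequence with parameter `ε` started at `x₀`: each point maximizes `f` over the
closed ball of radius `ε` around the previous point, and the sequence becomes constant as soon
as the density value stops strictly increasing. -/
def IsMaxShiftSeq {d : ℕ} (f : Euc d → ℝ) (ε : ℝ) (x₀ : Euc d) (x : ℕ → Euc d) : Prop :=
  x 0 = x₀ ∧ ∀ k : ℕ,
    x (k+1) ∈ closedBall (x k) ε ∧
    (∀ y ∈ closedBall (x k) ε, f y ≤ f (x (k+1))) ∧
    (f (x (k+1)) = f (x k) → ∀ m, k + 1 ≤ m → x m = x (k+1))

/-- If `ε` is smaller than the separation between the level cluster `C(x₀)`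
of a support point `x₀` and the rest of the upper level set `{f ≥ f x₀}`, then any
Max Shift sequence started at `x₀` stays in `C(x₀)` and converges in finitely many steps to a
point of `C(x₀)` that maximizes `f` on the ball of radius `ε` around it; in particular that
point is a mode. -/
theorem maxShift_converges_in_level_cluster
    {d : ℕ} (hd : 0 < d) (f : Euc d → ℝ) (hf : IsNiceDensity f)
    (x₀ : Euc d) (hx₀ : x₀ ∈ closure (Function.support f))
    (ε : ℝ) (hε : 0 < ε)
    (hsep : ∀ y ∈ connectedComponentIn {z : Euc d | f x₀ ≤ f z} x₀,
      ∀ w ∈ {z : Euc d | f x₀ ≤ f z} \ connectedComponentIn {z : Euc d | f x₀ ≤ f z} x₀,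
        ε < dist y w)
    (x : ℕ → Euc d) (hx : IsMaxShiftSeq f ε x₀ x) :
    (∀ k, x k ∈ connectedComponentIn {z : Euc d | f x₀ ≤ f z} x₀) ∧
    ∃ K : ℕ, (∀ m, K ≤ m → x m = x K) ∧
      x K ∈ connectedComponentIn {z : Euc d | f x₀ ≤ f z} x₀ ∧
      (∀ y ∈ ball (x K) ε, f y ≤ f (x K)) ∧
      IsLocalMax f (x K) := by
  obtain ⟨hx0, hstep⟩ := hx
  set U := {z : Euc d | f x₀ ≤ f z} with hUdef
  have hx₀U : x₀ ∈ U := by simp only [hUdef, Set.mem_setOf_eq]; exact le_refl _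
  have hfc : Continuous f := hf.2.2.2.1.continuous
  have hnonneg := hf.1
  have hmono1 : ∀ k, f (x k) ≤ f (x (k + 1)) := fun k =>
    (hstep k).2.1 (x k) (by simp [hε.le])
  have hmono : Monotone fun k => f (x k) := monotone_nat_of_le_succ hmono1
  have hC : ∀ k, x k ∈ connectedComponentIn U x₀ := by
    intro k
    induction k with
    | zero => rw [hx0]; exact mem_connectedComponentIn hx₀U
    | succ k ih =>
      have hkU : x k ∈ U := connectedComponentIn_subset U x₀ ih
      have hU' : x (k + 1) ∈ U := by
        simp only [hUdef, Set.mem_setOf_eq] at hkU ⊢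
        exact le_trans hkU (hmono1 k)
      by_contra hnot
      have hlt := hsep (x k) ih (x (k + 1)) ⟨hU', hnot⟩
      have hd := (hstep k).1
      rw [mem_closedBall, dist_comm] at hd
      exact absurd hd (not_le.mpr hlt)
  refine ⟨hC, ?_⟩
  -- positivity of f (x 1)
  have hpos : 0 < f (x 1) := by
    obtain ⟨y, hy, hyne⟩ :=
      mem_closure_iff.mp hx₀ (ball x₀ ε) isOpen_ball (mem_ball_self hε)
    have hyle : f y ≤ f (x 1) :=
      (hstep 0).2.1 y (by rw [hx0]; exact ball_subset_closedBall hy)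
    exact lt_of_lt_of_le ((hnonneg y).lt_of_ne (Ne.symm hyne)) hyle
  -- the superlevel set at level f (x 1) is compact
  have hev : ∀ᶠ z in cocompact (Euc d), f z < f (x 1) :=
    hf.2.2.1.eventually (gt_mem_nhds hpos)
  obtain ⟨K0, hK0c, hK0⟩ := hasBasis_cocompact.eventually_iff.mp hev
  set S : Set (Euc d) := {z | f (x 1) ≤ f z} with hSdef
  have hSsub : S ⊆ K0 := by
    intro z hz
    by_contra h
    exact absurd (hK0 h) (not_lt.mpr hz)
  have hScl : IsClosed S := isClosed_le continuous_const hfc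
  have hS : IsCompact S := hK0c.of_isClosed_subset hScl hSsub
  by_cases hstop : ∃ k, f (x (k + 1)) = f (x k)
  · obtain ⟨k, hk⟩ := hstop
    have hconst := (hstep k).2.2 hk
    have h2 : x (k + 2) = x (k + 1) := hconst (k + 2) (by omega)
    have hmax : ∀ y ∈ ball (x (k + 1)) ε, f y ≤ f (x (k + 1)) := by
      intro y hy
      have := (hstep (k + 1)).2.1 y (ball_subset_closedBall hy)
      rwa [h2] at this
    exact ⟨k + 1, hconst, hC (k + 1), hmax,
      Filter.eventually_of_mem (ball_mem_nhds _ hε) hmax⟩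
  · push_neg at hstop
    exfalso
    have hstrict : ∀ k, f (x k) < f (x (k + 1)) := fun k =>
      (hmono1 k).lt_of_ne (Ne.symm (hstop k))
    have hxS : ∀ k : ℕ, x (k + 1) ∈ S := fun k =>
      hmono (Nat.succ_le_succ (Nat.zero_le k))
    obtain ⟨M, hM⟩ := hf.2.2.2.2.2.1
    have hbdd : BddAbove (Set.range fun k => f (x k)) := by
      refine ⟨M, ?_⟩
      rintro _ ⟨k, rfl⟩
      exact (abs_le.mp (hM (x k))).2
    set L := ⨆ k, f (x k) with hLdef
    have hL : Tendsto (fun k => f (x k)) atTop (𝓝 L) := tendsto_atTop_ciSup hmono hbdd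
    have hle : ∀ k, f (x k) ≤ L := fun k => le_ciSup hbdd k
    obtain ⟨x', hx'S, φ, hφ, ht⟩ := hS.tendsto_subseq (fun j : ℕ => hxS j)
    have hφt : Tendsto (fun j => φ j + 1) atTop atTop :=
      tendsto_atTop_mono (fun j => le_trans (hφ.id_le j) (Nat.le_succ _)) tendsto_id
    have ht1 : Tendsto (fun j => f (x (φ j + 1))) atTop (𝓝 (f x')) :=
      (hfc.continuousAt.tendsto).comp ht
    have ht2 : Tendsto (fun j => f (x (φ j + 1))) atTop (𝓝 L) := hL.comp hφt
    have hfx' : f x' = L := tendsto_nhds_unique ht1 ht2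
    obtain ⟨N, hN⟩ := Metric.tendsto_atTop.mp ht ε hε
    have hball : x' ∈ closedBall (x (φ N + 1)) ε := by
      rw [mem_closedBall, dist_comm]
      exact le_of_lt (hN N le_rfl)
    have h1 : f x' ≤ f (x (φ N + 1 + 1)) := (hstep (φ N + 1)).2.1 x' hball
    have h2 : f (x (φ N + 1 + 1)) < f (x (φ N + 1 + 2)) := hstrict _
    have h3 : f (x (φ N + 1 + 2)) ≤ L := hle _
    rw [hfx'] at h1
    linarith
end

section
/- Let x₀ be a point with f(x₀) > 0 and write C(x₀) for the connected component of {f ≥ f(x₀)} containing x₀. Suppose ε > 0 is smaller than the distance between C(x₀) and {f ≥ f(x₀)} \ C(x₀), and small enough that every mode contained in C(x₀) is a strict maximum of f within radius ε of itself. Then along any Max Shift sequence (x_k) with parameter ε started at x₀, every shift has size exactly ε, i.e., ‖x_{k+1} − x_k‖ = ε for every k, except possibly the very last shift before the sequence becomes constant. -/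
open Metric Set Filter MeasureTheory Topology
open scoped Topology RealInnerProductSpace

/-- Under the separation condition on `ε`, and provided every mode in the
level cluster of `x₀` is a strict maximum of `f` within radius `ε`, every shift of a Max Shift
sequence started at `x₀` has size exactly `ε`, except possibly the very last shift before the
sequence becomes constant. -/
theorem maxShift_shifts_have_size_eps
    {d : ℕ} (hd : 0 < d) (f : Euc d → ℝ) (hf : IsNiceDensity f)
    (x₀ : Euc d) (hx₀ : 0 < f x₀)
    (ε : ℝ) (hε : 0 < ε)
    (hsep : ∀ y ∈ connectedComponentIn {z : Euc d | f x₀ ≤ f z} x₀,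
      ∀ w ∈ {z : Euc d | f x₀ ≤ f z} \ connectedComponentIn {z : Euc d | f x₀ ≤ f z} x₀,
        ε < dist y w)
    (hstrict : ∀ m ∈ connectedComponentIn {z : Euc d | f x₀ ≤ f z} x₀, IsLocalMax f m →
      ∀ y ∈ closedBall m ε, y ≠ m → f y < f m)
    (x : ℕ → Euc d) (hx : IsMaxShiftSeq f ε x₀ x) :
    ∀ k : ℕ, (¬ ∀ m, k + 1 ≤ m → x m = x (k+1)) → ‖x (k+1) - x k‖ = ε := by
  obtain ⟨hx0, hstep⟩ := hx
  set C := connectedComponentIn {z : Euc d | f x₀ ≤ f z} x₀ with hC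
  have hx0C : x₀ ∈ C := mem_connectedComponentIn (by simp)
  have hmem : ∀ k, x k ∈ C := by
    intro k
    induction k with
    | zero => rw [hx0]; exact hx0C
    | succ k ih =>
      have hball := (hstep k).1
      have hle : f (x k) ≤ f (x (k+1)) := (hstep k).2.1 (x k) (mem_closedBall_self hε.le)
      have hset : x (k+1) ∈ {z : Euc d | f x₀ ≤ f z} :=
        le_trans (connectedComponentIn_subset {z : Euc d | f x₀ ≤ f z} x₀ ih) hle
      by_contra hcon
      have h1 := hsep (x k) ih (x (k+1)) ⟨hset, hcon⟩
      have h2 : dist (x k) (x (k+1)) ≤ ε := by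
        rw [dist_comm]; exact mem_closedBall.mp hball
      linarith
  intro k hk
  have hd1 : dist (x (k+1)) (x k) ≤ ε := mem_closedBall.mp (hstep k).1
  rcases eq_or_lt_of_le hd1 with heq | hlt
  · rw [← heq]; exact (dist_eq_norm _ _).symm
  · exfalso
    apply hk
    have hloc : IsLocalMax f (x (k+1)) := by
      have hnhds : closedBall (x k) ε ∈ 𝓝 (x (k+1)) := by
        apply mem_of_superset
          (ball_mem_nhds _ (by linarith : (0:ℝ) < ε - dist (x (k+1)) (x k)))
        intro y hy
        have ht : dist y (x k) ≤ dist y (x (k+1)) + dist (x (k+1)) (x k) :=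
          dist_triangle _ _ _
        have hy' : dist y (x (k+1)) < ε - dist (x (k+1)) (x k) := mem_ball.mp hy
        exact mem_closedBall.mpr (by linarith)
      exact Filter.eventually_of_mem hnhds ((hstep k).2.1)
    have hstrict' := hstrict (x (k+1)) (hmem (k+1)) hloc
    have h2 : x (k+2) = x (k+1) := by
      by_contra hne
      have ha : f (x (k+2)) < f (x (k+1)) := hstrict' (x (k+2)) (hstep (k+1)).1 hne
      have hb : f (x (k+1)) ≤ f (x (k+2)) :=
        (hstep (k+1)).2.1 (x (k+1)) (mem_closedBall_self hε.le)
      linarith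
    have hconst := (hstep (k+1)).2.2 (by rw [h2])
    intro m hm
    rcases eq_or_lt_of_le hm with h | h
    · rw [← h]
    · rw [hconst m h, h2]
end

section
/- There is a constant C₀ > 0, depending only on κ₂ = sup_x ‖∇²f(x)‖, with the following property. Let x₀ be a point with f(x₀) > 0 and suppose ε > 0 is small enough that along every Max Shift sequence with parameter ε started at x₀ all shifts except possibly the last have size exactly ε. Then for every such sequence (x_k) and every index k with ∇f(x_k) ≠ 0, except possibly the last shift, ‖(x_{k+1} − x_k) − ε·∇f(x_k)/‖∇f(x_k)‖‖ ≤ C₀·ε^{3/2}/‖∇f(x_k)‖^{1/2}. -/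
open Metric Set Filter MeasureTheory Topology
open scoped Topology RealInnerProductSpace

/-!
Compare the Max Shift step `u = x_{k+1} - x_k` with the step `v = ε ∇f(x_k) / ‖∇f(x_k)‖` of the
same length in the gradient direction. Since `x_k + v` lies in the ball over which `x_{k+1}`
maximizes `f`, the second-order Taylor bound (with the Lipschitz constant `κ₂` of `∇f`) gives
`⟪∇f(x_k), u⟫ ≥ ε ‖∇f(x_k)‖ - 2 κ₂ ε²`. As `‖u‖ = ‖v‖ = ε`, this makes
`‖u - v‖² = 2ε² - 2⟪u, v⟫ ≤ 4 κ₂ ε³ / ‖∇f(x_k)‖`.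
-/

section InnerProductSpace

variable {E : Type*} [NormedAddCommGroup E] [InnerProductSpace ℝ E]

theorem norm_sub_smul_sq_le_of_le_inner {u g : E} {ε δ : ℝ} (hu : ‖u‖ = ε) (hg : g ≠ 0)
    (hinner : ε * ‖g‖ - δ ≤ ⟪g, u⟫) :
    ‖u - (ε / ‖g‖) • g‖ ^ 2 ≤ 2 * ε * δ / ‖g‖ := by
  have hG : 0 < ‖g‖ := norm_pos_iff.2 hg
  have hε : 0 ≤ ε := hu ▸ norm_nonneg u
  have key : ε / ‖g‖ * (ε * ‖g‖ - δ) ≤ ε / ‖g‖ * ⟪g, u⟫ := by gcongr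
  rw [norm_sub_sq_real, hu, norm_smul, real_inner_smul_right, real_inner_comm, Real.norm_eq_abs,
    abs_of_nonneg (by positivity)]
  field_simp at key ⊢
  nlinarith

variable [CompleteSpace E] {f : E → ℝ}

theorem lipschitzWith_gradient_of_norm_fderiv_le (hg : Differentiable ℝ (gradient f))
    {M : ℝ} (hM : ∀ x, ‖fderiv ℝ (gradient f) x‖ ≤ M) :
    LipschitzWith M.toNNReal (gradient f) :=
  lipschitzWith_of_nnnorm_fderiv_le hg fun x ↦ by
    rw [← NNReal.coe_le_coe, coe_nnnorm]
    exact (hM x).trans (Real.le_coe_toNNReal M)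

theorem abs_sub_sub_inner_gradient_le (hf : Differentiable ℝ f) {K : NNReal}
    (hK : LipschitzWith K (gradient f)) (x h : E) :
    |f (x + h) - f x - ⟪gradient f x, h⟫| ≤ K * ‖h‖ ^ 2 := by
  have hfderiv : ∀ z, fderiv ℝ f z = InnerProductSpace.toDual ℝ E (gradient f z) := fun z ↦
    (hf z).hasGradientAt.hasFDerivAt.fderiv
  have bound : ∀ z ∈ closedBall x ‖h‖,
      ‖fderiv ℝ f z - InnerProductSpace.toDual ℝ E (gradient f x)‖ ≤ K * ‖h‖ := by
    intro z hz
    rw [hfderiv, ← map_sub, LinearIsometryEquiv.norm_map, ← dist_eq_norm]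
    exact (hK.dist_le_mul z x).trans (by gcongr; exact hz)
  have := (convex_closedBall x ‖h‖).norm_image_sub_le_of_norm_fderiv_le' (fun z _ ↦ hf z) bound
    (mem_closedBall_self (norm_nonneg h)) (by simp : x + h ∈ closedBall x ‖h‖)
  simpa [sq, mul_assoc] using this

theorem le_inner_gradient_of_forall_le (hf : Differentiable ℝ f) {K : NNReal}
    (hK : LipschitzWith K (gradient f)) {x u : E} {ε : ℝ} (hg : gradient f x ≠ 0)
    (hu : ‖u‖ ≤ ε) (hmax : ∀ y ∈ closedBall x ε, f y ≤ f (x + u)) :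
    ε * ‖gradient f x‖ - 2 * K * ε ^ 2 ≤ ⟪gradient f x, u⟫ := by
  set g := gradient f x
  set v := (ε / ‖g‖) • g
  have hε : 0 ≤ ε := (norm_nonneg u).trans hu
  have hG : 0 < ‖g‖ := norm_pos_iff.2 hg
  have hv : ‖v‖ = ε := by
    rw [norm_smul, Real.norm_eq_abs, abs_of_nonneg (by positivity), div_mul_cancel₀ _ hG.ne']
  have hgv : ⟪g, v⟫ = ε * ‖g‖ := by
    rw [real_inner_smul_right, real_inner_self_eq_norm_sq]
    field_simp
  have hle : f (x + v) ≤ f (x + u) := hmax _ (by simp [hv])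
  have taylor_v := abs_le.1 (abs_sub_sub_inner_gradient_le hf hK x v)
  have taylor_u := abs_le.1 (abs_sub_sub_inner_gradient_le hf hK x u)
  have hu2 : ‖u‖ ^ 2 ≤ ε ^ 2 := by gcongr
  rw [hv, hgv] at taylor_v
  nlinarith [K.coe_nonneg]

end InnerProductSpace

theorem Real.sqrt_four_mul_mul_pow_three_div {M ε G : ℝ} (hM : 0 ≤ M) (hε : 0 ≤ ε)
    (hG : 0 ≤ G) :
    √(4 * M * ε ^ 3 / G) = 2 * √M * ε ^ ((3:ℝ)/2) / G ^ ((1:ℝ)/2) := by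
  have h3 : ε ^ ((3:ℝ)/2) = √(ε ^ 3) := by
    rw [Real.sqrt_eq_rpow, ← Real.rpow_natCast, ← Real.rpow_mul hε]; norm_num
  rw [h3, ← Real.sqrt_eq_rpow, Real.sqrt_div' _ hG, Real.sqrt_mul' _ (by positivity),
    Real.sqrt_mul' _ hM, show (4:ℝ) = 2 ^ 2 by norm_num, Real.sqrt_sq zero_le_two]

theorem maxShift_shift_close_to_gradient_general
    {d : ℕ} (f : Euc d → ℝ) (hf : IsNiceDensity f) :
    ∃ C₀ > (0:ℝ),
      ∀ x₀ : Euc d, 0 < f x₀ → ∀ ε > (0:ℝ),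
        (∀ x : ℕ → Euc d, IsMaxShiftSeq f ε x₀ x →
          ∀ k : ℕ, (¬ ∀ m, k + 1 ≤ m → x m = x (k+1)) → ‖x (k+1) - x k‖ = ε) →
        ∀ x : ℕ → Euc d, IsMaxShiftSeq f ε x₀ x →
          ∀ k : ℕ, gradient f (x k) ≠ 0 → (¬ ∀ m, k + 1 ≤ m → x m = x (k+1)) →
            ‖(x (k+1) - x k) - (ε / ‖gradient f (x k)‖) • gradient f (x k)‖ ≤
              C₀ * ε ^ ((3:ℝ)/2) / ‖gradient f (x k)‖ ^ ((1:ℝ)/2) := by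
  obtain ⟨-, -, -, hdiff, hdg, -, -, ⟨M, hM⟩, -⟩ := hf
  set K := M.toNNReal
  have hK : LipschitzWith K (gradient f) := lipschitzWith_gradient_of_norm_fderiv_le hdg hM
  refine ⟨2 * √K + 1, by positivity, ?_⟩
  intro x₀ _ ε hε hshift x hx k hgrad hlast
  obtain ⟨-, hmax, -⟩ := hx.2 k
  have hu : ‖x (k + 1) - x k‖ = ε := hshift x hx k hlast
  have hinner := le_inner_gradient_of_forall_le hdiff hK hgrad hu.le
    (by rwa [add_sub_cancel])
  have hsq := norm_sub_smul_sq_le_of_le_inner hu hgrad hinner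
  calc _ ≤ √(4 * K * ε ^ 3 / ‖gradient f (x k)‖) :=
        Real.le_sqrt_of_sq_le (hsq.trans_eq (by ring))
    _ = 2 * √K * ε ^ ((3:ℝ)/2) / ‖gradient f (x k)‖ ^ ((1:ℝ)/2) :=
        Real.sqrt_four_mul_mul_pow_three_div K.coe_nonneg hε.le (norm_nonneg _)
    _ ≤ _ := by gcongr; linarith

/-- There is a constant `C₀ > 0` (depending only on `κ₂ = sup ‖∇²f‖`) such
that whenever `ε` is small enough that all shifts of Max Shift sequences started at `x₀`
(except possibly the last) have size exactly `ε`, every shift is within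
`C₀ ε^{3/2} / ‖∇f(x_k)‖^{1/2}` of `ε` times the normalized gradient. -/
theorem maxShift_shift_close_to_gradient
    {d : ℕ} (hd : 0 < d) (f : Euc d → ℝ) (hf : IsNiceDensity f) :
    ∃ C₀ > (0:ℝ),
      ∀ x₀ : Euc d, 0 < f x₀ → ∀ ε > (0:ℝ),
        (∀ x : ℕ → Euc d, IsMaxShiftSeq f ε x₀ x →
          ∀ k : ℕ, (¬ ∀ m, k + 1 ≤ m → x m = x (k+1)) → ‖x (k+1) - x k‖ = ε) →
        ∀ x : ℕ → Euc d, IsMaxShiftSeq f ε x₀ x →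
          ∀ k : ℕ, gradient f (x k) ≠ 0 → (¬ ∀ m, k + 1 ≤ m → x m = x (k+1)) →
            ‖(x (k+1) - x k) - (ε / ‖gradient f (x k)‖) • gradient f (x k)‖ ≤
              C₀ * ε ^ ((3:ℝ)/2) / ‖gradient f (x k)‖ ^ ((1:ℝ)/2) :=
  maxShift_shift_close_to_gradient_general f hf
end
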